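/- For σ > 0, S₁₁ > 0, |j| ≤ 1, and ω > 0, the function C(t) = S₁₁ e^{−σ|t|}(cos(ωt) + (σ j/ω) sin(ω|t|)) has Fourier transform Ĉ(ν) = ∫ℝ C(t) e^{−iνt} dt which is real and nonnegative for all ν ∈ ℝ. -/

import Mathlib

/-!
With `k = σ j / ω` and `a = σ - ω i` (so `Re a = σ > 0`), the covariance is
`C t = Re (S₁₁ (1 - k i) e^{-a|t|})`. The transform of `e^{-a|t|}` is `(a + iν)⁻¹ + (a - iν)⁻¹`,
and that of `e^{-ā|t|}` is its conjugate, so the transform of `C` is the real number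
`S₁₁ [(σ + k(ω-ν)) / (σ² + (ω-ν)²) + (σ + k(ω+ν)) / (σ² + (ω+ν)²)]`.
Over the common denominator its numerator is `2 (σ + kω)(σ² + ω²) + 2 (σ - kω) ν²`,
which is nonnegative because `|kω| = σ |j| ≤ σ`.
-/

open MeasureTheory Set Complex
open scoped ComplexConjugate

section FourierExpAbs

variable {a : ℂ} (ν : ℝ)

lemma cexp_neg_mul_abs_mul_cexp_eqOn_Ioi :
    EqOn (fun t : ℝ ↦ cexp (-a * |t|) * cexp (-I * ν * t))
      (fun t : ℝ ↦ cexp (-(a + ν * I) * t)) (Ioi 0) := fun t ht ↦ by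
  simp only [abs_of_pos (mem_Ioi.mp ht), ← Complex.exp_add]
  ring_nf

lemma cexp_neg_mul_abs_mul_cexp_eqOn_Iic :
    EqOn (fun t : ℝ ↦ cexp (-a * |t|) * cexp (-I * ν * t))
      (fun t : ℝ ↦ cexp ((a - ν * I) * t)) (Iic 0) := fun t ht ↦ by
  simp only [abs_of_nonpos (mem_Iic.mp ht), ofReal_neg, ← Complex.exp_add]
  ring_nf

lemma integrable_cexp_neg_mul_abs_mul_cexp (ha : 0 < a.re) :
    Integrable (fun t : ℝ ↦ cexp (-a * |t|) * cexp (-I * ν * t)) := by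
  rw [← integrableOn_univ, ← Iic_union_Ioi (a := (0 : ℝ))]
  refine IntegrableOn.union ?_ ?_
  · exact (integrableOn_exp_mul_complex_Iic (by simpa) 0).congr_fun
      (cexp_neg_mul_abs_mul_cexp_eqOn_Iic ν).symm measurableSet_Iic
  · exact (integrableOn_exp_mul_complex_Ioi (by simpa) 0).congr_fun
      (cexp_neg_mul_abs_mul_cexp_eqOn_Ioi ν).symm measurableSet_Ioi

lemma integral_cexp_neg_mul_abs_mul_cexp (ha : 0 < a.re) :
    ∫ t : ℝ, cexp (-a * |t|) * cexp (-I * ν * t) = (a + ν * I)⁻¹ + (a - ν * I)⁻¹ := by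
  have hIoi : ∫ t : ℝ in Ioi 0, cexp (-a * |t|) * cexp (-I * ν * t) = (a + ν * I)⁻¹ := by
    rw [setIntegral_congr_fun measurableSet_Ioi (cexp_neg_mul_abs_mul_cexp_eqOn_Ioi ν),
      integral_exp_mul_complex_Ioi (by simpa) 0, ofReal_zero, mul_zero,
      Complex.exp_zero, neg_div_neg_eq, one_div]
  have hIic : ∫ t : ℝ in Iic 0, cexp (-a * |t|) * cexp (-I * ν * t) = (a - ν * I)⁻¹ := by
    rw [setIntegral_congr_fun measurableSet_Iic (cexp_neg_mul_abs_mul_cexp_eqOn_Iic ν),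
      integral_exp_mul_complex_Iic (by simpa) 0, ofReal_zero, mul_zero,
      Complex.exp_zero, one_div]
  have hint := integrable_cexp_neg_mul_abs_mul_cexp ν ha
  rw [← intervalIntegral.integral_Iic_add_Ioi hint.integrableOn hint.integrableOn, hIoi, hIic,
    add_comm]

lemma integral_re_mul_cexp_neg_mul_abs_mul_cexp (c : ℂ) (ha : 0 < a.re) :
    ∫ t : ℝ, ((c * cexp (-a * |t|)).re : ℂ) * cexp (-I * ν * t) =
      (c * ((a + ν * I)⁻¹ + (a - ν * I)⁻¹)).re := by
  have ha' : 0 < (conj a).re := by simpa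
  have hsplit : ∀ t : ℝ, ((c * cexp (-a * |t|)).re : ℂ) * cexp (-I * ν * t) =
      c / 2 * (cexp (-a * |t|) * cexp (-I * ν * t)) +
        conj c / 2 * (cexp (-conj a * |t|) * cexp (-I * ν * t)) := by
    intro t
    rw [re_eq_add_conj, map_mul, ← Complex.exp_conj]
    simp only [map_mul, map_neg, conj_ofReal]
    ring
  simp_rw [hsplit]
  rw [integral_add ((integrable_cexp_neg_mul_abs_mul_cexp ν ha).const_mul _)
      ((integrable_cexp_neg_mul_abs_mul_cexp ν ha').const_mul _),
    integral_const_mul, integral_const_mul, integral_cexp_neg_mul_abs_mul_cexp ν ha,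
    integral_cexp_neg_mul_abs_mul_cexp ν ha', re_eq_add_conj]
  simp only [map_mul, map_add, map_inv₀, map_sub, conj_ofReal, conj_I]
  ring

end FourierExpAbs

lemma underdamped_eq_re (S σ ω k t : ℝ) :
    S * Real.exp (-σ * |t|) * (Real.cos (ω * t) + k * Real.sin (ω * |t|)) =
      (S * (1 - k * I) * cexp (-(σ - ω * I) * |t|)).re := by
  have hcos : Real.cos (ω * |t|) = Real.cos (ω * t) := by
    rcases abs_choice t with h | h <;> simp [h]
  simp only [neg_mul, neg_sub, mul_re, ofReal_re, sub_re, one_re, I_re, mul_zero, ofReal_im, I_im,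
    mul_one, sub_self, sub_zero, sub_im, one_im, mul_im, add_zero, zero_sub, mul_neg, zero_mul,
    neg_zero, exp_re, zero_add, hcos, exp_im, sub_neg_eq_add]
  ring

lemma re_one_sub_mul_I_mul_inv (k σ x : ℝ) :
    ((1 - k * I) * (σ - x * I)⁻¹).re = (σ + k * x) / (σ ^ 2 + x ^ 2) := by
  simp only [mul_re, sub_re, one_re, ofReal_re, I_re, mul_zero, ofReal_im, I_im, mul_one, sub_self,
    sub_zero, inv_re, normSq_apply, sub_im, mul_im, add_zero, zero_sub, mul_neg, neg_mul, neg_neg,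
    one_mul, one_im, inv_im, sub_neg_eq_add]
  ring

lemma underdamped_spectrum_nonneg {σ k ω : ℝ} (ν : ℝ) (hσ : 0 < σ) (hk : |k * ω| ≤ σ) :
    0 ≤ (σ + k * (ω - ν)) / (σ ^ 2 + (ω - ν) ^ 2) + (σ + k * (ω + ν)) / (σ ^ 2 + (ω + ν) ^ 2) := by
  have hnum : (σ + k * (ω - ν)) * (σ ^ 2 + (ω + ν) ^ 2) + (σ ^ 2 + (ω - ν) ^ 2) * (σ + k * (ω + ν)) =
      2 * ((σ + k * ω) * (σ ^ 2 + ω ^ 2) + (σ - k * ω) * ν ^ 2) := by ring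
  obtain ⟨hlo, hhi⟩ := abs_le.mp hk
  rw [div_add_div _ _ (by positivity) (by positivity), hnum]
  have hplus : 0 ≤ σ + k * ω := by linarith
  have hminus : 0 ≤ σ - k * ω := by linarith
  positivity

theorem integral_underdamped_mul_cexp (S σ ω k ν : ℝ) (hσ : 0 < σ) :
    ∫ t : ℝ, ((S * Real.exp (-σ * |t|) * (Real.cos (ω * t) + k * Real.sin (ω * |t|)) : ℝ) : ℂ) *
        cexp (-I * ν * t) =
      (S * ((σ + k * (ω - ν)) / (σ ^ 2 + (ω - ν) ^ 2) +
        (σ + k * (ω + ν)) / (σ ^ 2 + (ω + ν) ^ 2)) : ℝ) := by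
  have hre : 0 < ((σ : ℂ) - ω * I).re := by simpa using hσ
  simp_rw [underdamped_eq_re]
  rw [integral_re_mul_cexp_neg_mul_abs_mul_cexp ν _ hre, mul_assoc, re_ofReal_mul, mul_add,
    show (σ : ℂ) - ω * I + ν * I = σ - ((ω - ν : ℝ) : ℂ) * I by push_cast; ring,
    show (σ : ℂ) - ω * I - ν * I = σ - ((ω + ν : ℝ) : ℂ) * I by push_cast; ring,
    add_re, re_one_sub_mul_I_mul_inv, re_one_sub_mul_I_mul_inv]

theorem stmt_14 (σ S₁₁ j ω : ℝ) (hσ : 0 < σ) (hS : 0 < S₁₁) (hj : |j| ≤ 1) (hω : 0 < ω)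
    (C : ℝ → ℝ)
    (hC : ∀ t : ℝ, C t =
      S₁₁ * Real.exp (-σ * |t|) * (Real.cos (ω * t) + (σ * j / ω) * Real.sin (ω * |t|))) :
    ∀ ν : ℝ,
      (∫ t : ℝ, (C t : ℂ) * Complex.exp (-Complex.I * (ν : ℂ) * (t : ℂ))).im = 0 ∧
      0 ≤ (∫ t : ℝ, (C t : ℂ) * Complex.exp (-Complex.I * (ν : ℂ) * (t : ℂ))).re := by
  intro ν
  have hk : |σ * j / ω * ω| ≤ σ := by
    rw [div_mul_cancel₀ _ hω.ne', abs_mul, abs_of_pos hσ]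
    exact mul_le_of_le_one_right hσ.le hj
  simp_rw [hC]
  rw [integral_underdamped_mul_cexp _ _ _ _ _ hσ, ofReal_im, ofReal_re]
  exact ⟨rfl, mul_nonneg hS.le (underdamped_spectrum_nonneg ν hσ hk)⟩
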